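/- Let D be a finite-dimensional real inner product space, B : D → D a skew-symmetric invertible linear operator, and φ : D → D a linear operator with φ² = -I preserving the inner product, such that Bφ + φB = 0. Then dim D is divisible by 4. -/

import Mathlib

/-!
The orthogonal complex structure `φ` makes `D` a complex vector space. The real form
`ω X Y = ⟪B X, Y⟫` is alternating, nondegenerate (as `B` is injective) and satisfies
`ω (φ X) (φ Y) = -ω X Y`, which is exactly what makes `H X Y = ω (φ X) Y + i ω X Y`
complex bilinear. `H` is again alternating and nondegenerate, so the complex dimension of `D`
is even (a skew-symmetric matrix of odd size is singular) and its real dimension is divisible by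
four.
-/

open Module
open scoped Matrix RealInnerProductSpace

theorem Matrix.det_eq_zero_of_transpose_eq_neg {R n : Type*} [CommRing R] [IsAddTorsionFree R]
    [Fintype n] [DecidableEq n] {M : Matrix n n R} (hM : Mᵀ = -M)
    (hn : Odd (Fintype.card n)) : M.det = 0 := by
  refine self_eq_neg.mp ?_
  calc M.det = Mᵀ.det := M.det_transpose.symm
    _ = -M.det := by rw [hM, det_neg, hn.neg_one_pow, neg_one_mul]

theorem LinearMap.BilinForm.even_finrank_of_isAlt {K V : Type*} [Field K] [IsAddTorsionFree K]
    [AddCommGroup V] [Module K V] [FiniteDimensional K V] {H : LinearMap.BilinForm K V}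
    (hH : H.IsAlt) (hnd : H.Nondegenerate) : Even (finrank K V) := by
  let b := finBasis K V
  have hdet := (nondegenerate_iff_det_ne_zero b).mp hnd
  have hMt : (toMatrix b H)ᵀ = -toMatrix b H := by
    ext i j
    simp only [Matrix.transpose_apply, Matrix.neg_apply, toMatrix_apply]
    exact (hH.neg_eq (b i) (b j)).symm
  by_contra hodd
  rw [Nat.not_even_iff_odd, ← Fintype.card_fin (finrank K V)] at hodd
  exact hdet (Matrix.det_eq_zero_of_transpose_eq_neg hMt hodd)

theorem Complex.smul_eq_re_smul_add_im_smul_I_smul {V : Type*} [AddCommGroup V] [Module ℂ V]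
    [Module ℝ V] [IsScalarTower ℝ ℂ V] (z : ℂ) (x : V) :
    z • x = z.re • x + z.im • (Complex.I • x) := by
  conv_lhs => rw [← z.re_add_im]
  rw [add_smul, mul_smul, ← algebraMap_smul ℂ z.re x, ← algebraMap_smul ℂ z.im]
  rfl

namespace LinearMap.BilinForm

variable {V : Type*} [AddCommGroup V] [Module ℂ V] [Module ℝ V] {ω : LinearMap.BilinForm ℝ V}
  (hω : ∀ x y, ω (Complex.I • x) (Complex.I • y) = -ω x y)
include hω

theorem apply_I_smul_right (x y : V) : ω x (Complex.I • y) = ω (Complex.I • x) y := by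
  have h := hω (Complex.I • x) y
  rwa [smul_smul, Complex.I_mul_I, neg_one_smul, map_neg, LinearMap.neg_apply, neg_inj] at h

variable [IsScalarTower ℝ ℂ V]

def toComplex : LinearMap.BilinForm ℂ V :=
  LinearMap.mk₂ ℂ (fun x y => ω (Complex.I • x) y + ω x y * Complex.I)
    (fun x x' y => by simp only [smul_add, map_add, LinearMap.add_apply]; push_cast; ring)
    (fun c x y => by
      simp only [Complex.smul_eq_re_smul_add_im_smul_I_smul c x, smul_add, smul_comm Complex.I,
        smul_smul, Complex.I_mul_I, neg_one_smul, smul_neg, map_add, map_smul, map_neg,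
        LinearMap.add_apply, LinearMap.smul_apply, LinearMap.neg_apply, smul_eq_mul]
      conv_rhs => rw [← c.re_add_im]
      push_cast
      linear_combination -(c.im * ω x y : ℂ) * Complex.I_mul_I)
    (fun x y y' => by simp only [map_add]; push_cast; ring)
    (fun c x y => by
      simp only [Complex.smul_eq_re_smul_add_im_smul_I_smul c y, map_add, map_smul, hω,
        apply_I_smul_right hω, smul_eq_mul]
      conv_rhs => rw [← c.re_add_im]
      push_cast
      linear_combination -(c.im * ω x y : ℂ) * Complex.I_mul_I)

theorem toComplex_apply (x y : V) :
    toComplex hω x y = ω (Complex.I • x) y + ω x y * Complex.I :=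
  rfl

theorem isAlt_toComplex (halt : ω.IsAlt) : (toComplex hω).IsAlt := by
  intro x
  have : ω (Complex.I • x) x = -ω (Complex.I • x) x := by
    rw [halt.neg_eq, apply_I_smul_right hω]
  rw [toComplex_apply, self_eq_neg.mp this, halt.self_eq_zero]
  simp

theorem nondegenerate_toComplex (halt : ω.IsAlt) (hnd : ω.Nondegenerate) :
    (toComplex hω).Nondegenerate := by
  refine ((isAlt_toComplex hω halt).isRefl.nondegenerate_iff_separatingLeft).mpr fun x hx => ?_
  refine hnd.1 x fun y => ?_
  simpa [toComplex_apply] using congrArg Complex.im (hx y)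

theorem four_dvd_finrank_of_isAlt [FiniteDimensional ℝ V] (halt : ω.IsAlt)
    (hnd : ω.Nondegenerate) : 4 ∣ finrank ℝ V := by
  have : FiniteDimensional ℂ V := FiniteDimensional.right ℝ ℂ V
  obtain ⟨k, hk⟩ :=
    even_finrank_of_isAlt (isAlt_toComplex hω halt) (nondegenerate_toComplex hω halt hnd)
  rw [← finrank_mul_finrank ℝ ℂ V, Complex.finrank_real_complex, hk]
  exact ⟨k, by ring⟩

end LinearMap.BilinForm

namespace Module.End

variable {V : Type*} [AddCommGroup V] [Module ℝ V] (J : Module.End ℝ V) (hJ : J * J = -1)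

abbrev complexModule : Module ℂ V :=
  Module.compHom V (Complex.lift ⟨J, hJ⟩).toRingHom

theorem isScalarTower_complexModule :
    letI := J.complexModule hJ
    IsScalarTower ℝ ℂ V :=
  letI := J.complexModule hJ
  ⟨fun r z x => congrArg (· x) (map_smul (Complex.lift ⟨J, hJ⟩) r z)⟩

theorem complexModule_I_smul (x : V) :
    letI := J.complexModule hJ
    Complex.I • x = J x :=
  congrArg (· x) (Complex.liftAux_apply_I J hJ)

end Module.End

section SkewOperator

variable {E : Type*} [NormedAddCommGroup E] [InnerProductSpace ℝ E] {B : E →ₗ[ℝ] E}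
  (hB : ∀ x y, ⟪B x, y⟫ = -⟪x, B y⟫)
include hB

theorem isAlt_innerₗ_comp_of_skew : ((innerₗ E).comp B).IsAlt := fun x => by
  have := hB x x
  rw [real_inner_comm (B x) x] at this
  simpa using self_eq_neg.mp this

theorem nondegenerate_innerₗ_comp_of_skew (hinj : Function.Injective B) :
    ((innerₗ E).comp B).Nondegenerate := by
  refine ((isAlt_innerₗ_comp_of_skew hB).isRefl.nondegenerate_iff_separatingLeft).mpr
    fun x hx => hinj ?_
  have hBx : ⟪B x, B x⟫ = 0 := hx (B x)
  rw [inner_self_eq_zero.mp hBx, map_zero]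

end SkewOperator

theorem stmt5 {D : Type*} [NormedAddCommGroup D] [InnerProductSpace ℝ D]
    [FiniteDimensional ℝ D] (B φ : D →ₗ[ℝ] D)
    (hφ2 : ∀ X, φ (φ X) = -X)
    (hφg : ∀ X Y : D, ⟪φ X, φ Y⟫ = ⟪X, Y⟫)
    (hBskew : ∀ X Y : D, ⟪B X, Y⟫ = -⟪X, B Y⟫)
    (hBbij : Function.Bijective B)
    (hBφ : ∀ X, B (φ X) = -φ (B X)) :
    Module.finrank ℝ D % 4 = 0 := by
  have hφφ : φ * φ = -1 := LinearMap.ext hφ2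
  let _ := Module.End.complexModule φ hφφ
  have := Module.End.isScalarTower_complexModule φ hφφ
  have hI : ∀ X Y : D, (innerₗ D).comp B (Complex.I • X) (Complex.I • Y)
      = -(innerₗ D).comp B X Y := fun X Y => by
    simp only [Module.End.complexModule_I_smul φ hφφ, LinearMap.comp_apply, innerₗ_apply_apply,
      hBφ, inner_neg_left, hφg]
  exact Nat.mod_eq_zero_of_dvd <| LinearMap.BilinForm.four_dvd_finrank_of_isAlt hI
    (isAlt_innerₗ_comp_of_skew hBskew)
    (nondegenerate_innerₗ_comp_of_skew hBskew hBbij.injective)
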